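/- arXiv:2205.04309 — 3 statements merged into one kernel-verified Lean document; each statement's English description precedes it below -/
import Mathlib

section
/- Let L be a completely well-monotonic C-graph with min-predecessor maps ρ_c, let 𝒢 = (G, V_Eve, val) be a C-game with G = (V,E), and let φ : V → L be a progress measure. Let P_φ be the positional strategy that keeps, at each Eve vertex v, exactly those outgoing edges v →c v' of G attaining the minimum min over edges v →c v' of ρ_c(φ(v')), and keeps all outgoing edges of Adam vertices. Then for every finite path from v to v' in P_φ with coloration w ∈ C*, there is a finite path from φ(v) to φ(v') in L with coloration w. -/
/-!
Common vocabulary: graphs as edge relations `E : V → C → V → Prop` (a `C`-graph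
additionally has no sinks), infinite paths and their colorations, valuations,
values of vertices, morphisms, universality, monotonic graphs, games,
strategies, positional strategies and positionality, neutral colors.
-/

universe u v w

section Prelim

variable {C : Type} {X : Type}

/-- A `C`-graph (as an edge relation) has no sinks. -/
def NoSinks {V : Type v} (E : V → C → V → Prop) : Prop :=
  ∀ a : V, ∃ (c : C) (b : V), E a c b

/-- `InfPath E a w` : there is an infinite path from `a` with coloration `w`. -/
def InfPath {V : Type v} (E : V → C → V → Prop) (a : V) (w : ℕ → C) : Prop :=
  ∃ ρ : ℕ → V, ρ 0 = a ∧ ∀ i, E (ρ i) (w i) (ρ (i + 1))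

/-- The value of a vertex in a graph: supremum of values of colorations of
infinite paths from it. -/
noncomputable def vval {V : Type v} [CompleteLinearOrder X]
    (val : (ℕ → C) → X) (E : V → C → V → Prop) (a : V) : X :=
  sSup (val '' {w | InfPath E a w})

/-- Morphisms of `C`-graphs. -/
def IsMorphism {V : Type v} {V' : Type w} (E : V → C → V → Prop)
    (E' : V' → C → V' → Prop) (φ : V → V') : Prop :=
  ∀ ⦃a : V⦄ ⦃c : C⦄ ⦃b : V⦄, E a c b → E' (φ a) c (φ b)

/-- `val`-preserving morphisms of `C`-graphs. -/
def ValPreserving {V : Type v} {V' : Type w} [CompleteLinearOrder X]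
    (val : (ℕ → C) → X) (E : V → C → V → Prop) (E' : V' → C → V' → Prop)
    (φ : V → V') : Prop :=
  IsMorphism E E' φ ∧ ∀ a : V, vval val E' (φ a) = vval val E a

/-- Left composition: `a ≥ b → (b →c d) → (a →c d)`. -/
def LeftComp {L : Type v} [LinearOrder L] (M : L → C → L → Prop) : Prop :=
  ∀ ⦃a b : L⦄ ⦃c : C⦄ ⦃d : L⦄, b ≤ a → M b c d → M a c d

/-- Right composition: `(a →c b) → b ≥ d → (a →c d)`. -/
def RightComp {L : Type v} [LinearOrder L] (M : L → C → L → Prop) : Prop :=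
  ∀ ⦃a : L⦄ ⦃c : C⦄ ⦃b d : L⦄, M a c b → d ≤ b → M a c d

/-- A monotonic graph over a linearly ordered vertex set. -/
def Monotonic {L : Type v} [LinearOrder L] (M : L → C → L → Prop) : Prop :=
  LeftComp M ∧ RightComp M

/-- Every vertex has a `c`-predecessor, for every color `c`. -/
def CompletePreds {L : Type v} (M : L → C → L → Prop) : Prop :=
  ∀ (c : C) (l : L), ∃ p : L, M p c l

/-- `CWM C L M` : `M` is a completely well-monotonic `C`-graph over `L`:
monotonic, without sinks, well-ordered, a complete lattice, and with all
`c`-predecessors. -/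
def CWM (C : Type) (L : Type v) [LinearOrder L] (M : L → C → L → Prop) : Prop :=
  Monotonic M ∧ NoSinks M ∧ WellFounded ((· < ·) : L → L → Prop) ∧
    (∀ A : Set L, ∃ a : L, IsLUB A a) ∧ CompletePreds M

/-- `(κ, val)`-universality: every `C`-graph with fewer than `κ` vertices has a
`val`-preserving morphism into `M`. -/
def Universal {L : Type v} [CompleteLinearOrder X] (val : (ℕ → C) → X)
    (κ : Cardinal.{u}) (M : L → C → L → Prop) : Prop :=
  ∀ (V : Type u) (E : V → C → V → Prop), NoSinks E → Cardinal.mk V < κ →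
    ∃ φ : V → L, ValPreserving val E M φ

/-! Histories: finite paths from `v₀`, stored as lists of steps `(c, x)`,
most recent step first. -/

/-- Last vertex of a history. -/
def lastV {V : Type v} (v₀ : V) : List (C × V) → V
  | [] => v₀
  | (_, x) :: _ => x

/-- Validity of a history with respect to the graph `E` and start vertex `v₀`. -/
def ValidPath {V : Type v} (E : V → C → V → Prop) (v₀ : V) : List (C × V) → Prop
  | [] => True
  | (c, x) :: rest => ValidPath E v₀ rest ∧ E (lastV v₀ rest) c x

/-- A strategy (for Eve) from `v₀` in the game `(E, VEve, val)` : a subgraph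
`(H, F)` of the unfolding of `E` from `v₀`, containing the empty history,
without sinks, and closed under all extensions at Adam vertices. -/
structure Strategy {V : Type v} (E : V → C → V → Prop) (VEve : Set V) (v₀ : V) where
  H : Set (List (C × V))
  F : List (C × V) → C → List (C × V) → Prop
  valid : ∀ π ∈ H, ValidPath E v₀ π
  nil_mem : [] ∈ H
  F_sub : ∀ ⦃π : List (C × V)⦄ ⦃c : C⦄ ⦃π' : List (C × V)⦄,
    F π c π' → π ∈ H ∧ π' ∈ H ∧ ∃ x : V, π' = (c, x) :: π
  no_sink : ∀ π ∈ H, ∃ (c : C) (π' : List (C × V)), F π c π'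
  adam_closed : ∀ π ∈ H, lastV v₀ π ∉ VEve →
    ∀ (c : C) (x : V), E (lastV v₀ π) c x → ((c, x) :: π) ∈ H ∧ F π c ((c, x) :: π)

/-- The value of a strategy: supremum of values of colorations of infinite
paths from the empty history in the strategy. -/
noncomputable def Strategy.value {V : Type v} [CompleteLinearOrder X]
    (val : (ℕ → C) → X) {E : V → C → V → Prop} {VEve : Set V} {v₀ : V}
    (S : Strategy E VEve v₀) : X :=
  sSup (val '' {w | ∃ ρ : ℕ → List (C × V), ρ 0 = [] ∧ ∀ i, S.F (ρ i) (w i) (ρ (i + 1))})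

/-- The value of a vertex in a game: infimum of values of strategies from it. -/
noncomputable def gameValue {V : Type v} [CompleteLinearOrder X] (val : (ℕ → C) → X)
    (E : V → C → V → Prop) (VEve : Set V) (v₀ : V) : X :=
  ⨅ S : Strategy E VEve v₀, S.value val

/-- A positional strategy: a subgraph of `E` over all vertices keeping all
outgoing edges of Adam vertices. -/
structure PosStrategy {V : Type v} (E : V → C → V → Prop) (VEve : Set V) where
  F : V → C → V → Prop
  sub : ∀ ⦃a : V⦄ ⦃c : C⦄ ⦃b : V⦄, F a c b → E a c b
  no_sink : NoSinks F
  adam_all : ∀ a : V, a ∉ VEve → ∀ (c : C) (b : V), E a c b → F a c b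

/-- The value of a positional strategy from a vertex. -/
noncomputable def PosStrategy.value {V : Type v} [CompleteLinearOrder X]
    (val : (ℕ → C) → X) {E : V → C → V → Prop} {VEve : Set V}
    (P : PosStrategy E VEve) (v₀ : V) : X :=
  vval val P.F v₀

/-- Optimality of a positional strategy. -/
def PosStrategy.Optimal {V : Type v} [CompleteLinearOrder X]
    (val : (ℕ → C) → X) {E : V → C → V → Prop} {VEve : Set V}
    (P : PosStrategy E VEve) : Prop :=
  ∀ v₀ : V, P.value val v₀ = gameValue val E VEve v₀

/-- A valuation is positional if every game with this valuation admits an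
optimal positional strategy. -/
def Positional [CompleteLinearOrder X] (val : (ℕ → C) → X) : Prop :=
  ∀ (V : Type u) (E : V → C → V → Prop), NoSinks E → ∀ VEve : Set V,
    ∃ P : PosStrategy E VEve, P.Optimal val

/-! Words and neutral colors. -/

/-- Concatenation of a finite word with an infinite word. -/
def wcat (u : List C) (w : ℕ → C) : ℕ → C := fun i =>
  if h : i < u.length then u.get ⟨i, h⟩ else w (i - u.length)

/-- `w'` is obtained from `w` by inserting finitely many `e`'s between
consecutive letters (and before the first letter):
`w' = e^{n₀} w₀ e^{n₁} w₁ ⋯`. -/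
def IsEpsInsertion (e : C) (w w' : ℕ → C) : Prop :=
  ∃ σ : ℕ → ℕ, StrictMono σ ∧ (∀ k, w' (σ k) = w k) ∧ ∀ i, i ∉ Set.range σ → w' i = e

/-- `e` is a neutral color for `val`. -/
def Neutral [CompleteLinearOrder X] (val : (ℕ → C) → X) (e : C) : Prop :=
  ∀ w w' : ℕ → C, IsEpsInsertion e w w' → val w' = val w

/-- `e` is eventually good for Eve. -/
def EvGoodForEve [CompleteLinearOrder X] (val : (ℕ → C) → X) (e : C) : Prop :=
  ∀ u : List C, val (wcat u fun _ => e) = ⨅ z : ℕ → C, val (wcat u z)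

/-- `e` is strongly neutral for `val`. -/
def StronglyNeutral [CompleteLinearOrder X] (val : (ℕ → C) → X) (e : C) : Prop :=
  Neutral val e ∧ EvGoodForEve val e

/-- Prefix-increasing valuations. -/
def PrefixIncreasing [CompleteLinearOrder X] (val : (ℕ → C) → X) : Prop :=
  ∀ (u : List C) (w : ℕ → C), val w ≤ val (wcat u w)

/-! Objectives. -/

/-- The valuation (into the two-element complete linear order `Prop`,
`⊥ = False`, `⊤ = True`) associated with an objective `W`: winning words have
value `⊥`. -/
def toVal (W : Set (ℕ → C)) : (ℕ → C) → Prop := fun w => w ∉ W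

/-- A vertex satisfies the objective `W` if every coloration of an infinite
path from it belongs to `W`. -/
def Sat {V : Type v} (W : Set (ℕ → C)) (E : V → C → V → Prop) (a : V) : Prop :=
  ∀ w : ℕ → C, InfPath E a w → w ∈ W

/-- Prefix-invariant objectives. -/
def PrefixInvariant (W : Set (ℕ → C)) : Prop :=
  ∀ (u : List C) (w : ℕ → C), wcat u w ∈ W ↔ w ∈ W

/-- The completion `L^⊤` of a monotonic graph: a new top vertex with all
outgoing edges is added. -/
def completionE {L : Type v} (M : L → C → L → Prop) :
    WithTop L → C → WithTop L → Prop := fun x c y =>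
  x = ⊤ ∨ ∃ a b : L, x = (a : WithTop L) ∧ y = (b : WithTop L) ∧ M a c b

/-- A graph has sufficiently many `e`-edges if `→e` is "well-founded" in the
sense that every nonempty set of vertices contains a vertex `a` with `b →e a`
for all `b` in the set. -/
def SuffEps {V : Type v} (E : V → C → V → Prop) (e : C) : Prop :=
  ∀ A : Set V, A.Nonempty → ∃ a ∈ A, ∀ b ∈ A, E b e a

end Prelim
/-- The min-predecessor map `ρ_c` of a completely well-monotonic graph:
`ρ_c(l') = min { l | l →c l' }` (the infimum, which is attained by
well-foundedness and completeness). -/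
noncomputable def minPred {C : Type} {L : Type v} [CompleteLinearOrder L]
    (M : L → C → L → Prop) (c : C) (l' : L) : L :=
  sInf {l | M l c l'}

open Classical in
/-- The update operator on maps `φ : V → L` associated to a game `(E, VEve)`
and a completely well-monotonic graph `M`. -/
noncomputable def Upd {C : Type} {L : Type v} {V : Type w} [CompleteLinearOrder L]
    (M : L → C → L → Prop) (E : V → C → V → Prop) (VEve : Set V)
    (φ : V → L) (a : V) : L :=
  if a ∈ VEve then sInf {x | ∃ (c : C) (b : V), E a c b ∧ x = minPred M c (φ b)}
  else sSup {x | ∃ (c : C) (b : V), E a c b ∧ x = minPred M c (φ b)}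

/-- A progress measure is a prefixpoint of the update operator. -/
def ProgressMeasure {C : Type} {L : Type v} {V : Type w} [CompleteLinearOrder L]
    (M : L → C → L → Prop) (E : V → C → V → Prop) (VEve : Set V)
    (φ : V → L) : Prop :=
  ∀ a : V, Upd M E VEve φ a ≤ φ a
/-- `FinPathCol E a ws b` : there is a finite path from `a` to `b` in `E`
with coloration `ws`. -/
def FinPathCol {C : Type} {V : Type w} (E : V → C → V → Prop) :
    V → List C → V → Prop
  | a, [], b => a = b
  | a, c :: cs, b => ∃ x : V, E a c x ∧ FinPathCol E x cs b

/-- The positional strategy `P_φ` extracted from a progress measure `φ`: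
at an Eve vertex exactly the outgoing edges attaining the minimum
`min_{v →c v'} ρ_c(φ(v'))` are kept, while Adam vertices keep all their
outgoing edges. -/
def PphiRel {C : Type} {L : Type v} {V : Type w} [CompleteLinearOrder L]
    (M : L → C → L → Prop) (E : V → C → V → Prop) (VEve : Set V)
    (φ : V → L) : V → C → V → Prop := fun a c b =>
  E a c b ∧ (a ∈ VEve → minPred M c (φ b) = Upd M E VEve φ a)

/-!
Every edge `a →c b` kept by `P_φ` satisfies `ρ_c(φ b) ≤ φ a`: at an Eve vertex
`ρ_c(φ b) = Upd φ a`, at an Adam vertex `ρ_c(φ b) ≤ Upd φ a`, and `Upd φ ≤ φ`.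
Since `ρ_c(φ b) →c φ b` by well-foundedness, left-composition yields
`φ a →c φ b`. So `φ` is a graph morphism from `P_φ` to `L`, and morphisms
carry finite paths to finite paths with the same coloration.
-/

theorem FinPathCol.map {C : Type} {V : Type v} {V' : Type w}
    {E : V → C → V → Prop} {E' : V' → C → V' → Prop} {f : V → V'}
    (hf : IsMorphism E E' f) {a b : V} {ws : List C} (h : FinPathCol E a ws b) :
    FinPathCol E' (f a) ws (f b) := by
  induction ws generalizing a with
  | nil => exact congrArg f h
  | cons c cs ih =>
    obtain ⟨x, hax, hxb⟩ := h
    exact ⟨f x, hf hax, ih hxb⟩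

section ProgressMeasure

variable {C : Type} {L : Type v} {V : Type w} [CompleteLinearOrder L]
  {M : L → C → L → Prop}

theorem minPred_edge (hwf : WellFounded ((· < ·) : L → L → Prop))
    (hpred : CompletePreds M) (c : C) (l : L) : M (minPred M c l) c l :=
  have : WellFoundedLT L := ⟨hwf⟩
  csInf_mem (hpred c l)

variable {E : V → C → V → Prop} {VEve : Set V} {φ : V → L}

theorem PphiRel.minPred_le (hpm : ProgressMeasure M E VEve φ) {a b : V} {c : C}
    (h : PphiRel M E VEve φ a c b) : minPred M c (φ b) ≤ φ a := by
  obtain ⟨hab, heve⟩ := h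
  refine le_trans ?_ (hpm a)
  by_cases ha : a ∈ VEve
  · exact (heve ha).le
  · rw [Upd, if_neg ha]
    exact le_sSup ⟨c, b, hab, rfl⟩

theorem isMorphism_pphiRel (hleft : LeftComp M)
    (hwf : WellFounded ((· < ·) : L → L → Prop)) (hpred : CompletePreds M)
    (hpm : ProgressMeasure M E VEve φ) : IsMorphism (PphiRel M E VEve φ) M φ :=
  fun _ c b h => hleft (h.minPred_le hpm) (minPred_edge hwf hpred c (φ b))

end ProgressMeasure

theorem stmt5_general {C : Type} {L : Type v} {V : Type w}
    [CompleteLinearOrder L]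
    (M : L → C → L → Prop) (hmono : Monotonic M)
    (hwf : WellFounded ((· < ·) : L → L → Prop)) (hpred : CompletePreds M)
    (E : V → C → V → Prop) (VEve : Set V)
    (φ : V → L) (hpm : ProgressMeasure M E VEve φ) :
    ∀ (a b : V) (ws : List C),
      FinPathCol (PphiRel M E VEve φ) a ws b → FinPathCol M (φ a) ws (φ b) :=
  fun _ _ _ => FinPathCol.map (isMorphism_pphiRel hmono.1 hwf hpred hpm)

/-- Lemma 4.3, from progress measures to positional
strategies.  If `φ` is a progress measure then every finite path
`v →w v'` in `P_φ` gives a finite path `φ(v) →w φ(v')` in `L`. -/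
theorem stmt5 {C X : Type} {L : Type v} {V : Type w} [CompleteLinearOrder X]
    [CompleteLinearOrder L] (val : (ℕ → C) → X)
    (M : L → C → L → Prop) (hmono : Monotonic M) (hns : NoSinks M)
    (hwf : WellFounded ((· < ·) : L → L → Prop)) (hpred : CompletePreds M)
    (E : V → C → V → Prop) (hE : NoSinks E) (VEve : Set V)
    (φ : V → L) (hpm : ProgressMeasure M E VEve φ) :
    ∀ (a b : V) (ws : List C),
      FinPathCol (PphiRel M E VEve φ) a ws b → FinPathCol M (φ a) ws (φ b) :=
  stmt5_general M hmono hwf hpred E VEve φ hpm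
end

section
/- Let val be a C-valuation with a strongly neutral color ε, and let G = (V,E) be a C-graph. Define the C-game 𝒢' = (G', V'_Eve, val) with G' = (V', E'), V' = V ∪ 𝒫⁺(V) (where 𝒫⁺(V) is the set of nonempty subsets of V), V'_Eve = 𝒫⁺(V), and E' = E ∪ { v →ε A : v ∈ V, A ∈ 𝒫⁺(V), v ∈ A } ∪ { A →ε v : A ∈ 𝒫⁺(V), v ∈ A }. Then for every v₀ ∈ V, val_{𝒢'}(v₀) = val_G(v₀). -/
/-!
Common vocabulary: graphs as edge relations `E : V → C → V → Prop` (a `C`-graph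
additionally has no sinks), infinite paths and their colorations, valuations,
values of vertices, morphisms, universality, monotonic graphs, games,
strategies, positional strategies and positionality, neutral colors.
-/

universe u v w

/-- The game `𝒢'` built from a graph `G = (V, E)` and a (strongly neutral)
color `e`: vertices are `V ⊕ 𝒫⁺(V)`, Eve controls the nonempty subsets,
edges are those of `E` together with `v →e A` and `A →e v` for `v ∈ A`. -/
def gameE {C : Type} {V : Type u} (E : V → C → V → Prop) (e : C) :
    V ⊕ {A : Set V // A.Nonempty} → C → V ⊕ {A : Set V // A.Nonempty} → Prop :=
  fun x c y =>
    match x, y with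
    | Sum.inl a, Sum.inl b => E a c b
    | Sum.inl a, Sum.inr A => c = e ∧ a ∈ A.val
    | Sum.inr A, Sum.inl b => c = e ∧ b ∈ A.val
    | Sum.inr _, Sum.inr _ => False

/-!
Every path of `G` from `v₀` is a play of `𝒢'` that never reaches a vertex of Eve, so every
strategy allows it: `val_G(v₀) ≤ val_𝒢'(v₀)`. Conversely, let Eve answer every move `v →ε A`
by going back to `v`. The plays of this strategy are the paths of `G` with `ε`-loops added at
every vertex. If such a play uses infinitely many edges of `G`, neutrality of `ε` gives it the
value of the underlying path of `G`; otherwise its coloration is `u ε^ω`, and eventual goodness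
bounds its value by that of `u` followed by the coloration of any path of `G` continuing it.
-/

section Paths
variable {C : Type} {V : Type u}

lemma NoSinks.exists_infPath {E : V → C → V → Prop} (hE : NoSinks E) (a : V) :
    ∃ w : ℕ → C, InfPath E a w := by
  choose c b h using hE
  refine ⟨fun i => c (b^[i] a), fun i => b^[i] a, rfl, fun i => ?_⟩
  simp only [Function.iterate_succ_apply']
  exact h _

lemma wcat_ofFn (w z : ℕ → C) (N i : ℕ) :
    wcat (List.ofFn fun j : Fin N => w j) z i = if i < N then w i else z (i - N) := by
  simp only [wcat, List.length_ofFn]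
  split_ifs <;> simp

def addLoops (E : V → C → V → Prop) (e : C) : V → C → V → Prop :=
  fun a c b => E a c b ∨ (c = e ∧ b = a)

variable {E : V → C → V → Prop} {e : C} {ρ : ℕ → V} {w : ℕ → C}

lemma addLoops_path_eq_of_no_edge (hρ : ∀ i, addLoops E e (ρ i) (w i) (ρ (i + 1)))
    {a b : ℕ} (hab : a ≤ b) (hloop : ∀ j, a ≤ j → j < b → ¬ E (ρ j) (w j) (ρ (j + 1))) :
    ρ b = ρ a := by
  induction b, hab using Nat.le_induction with
  | base => rfl
  | succ b hab ih =>
    rw [((hρ b).resolve_left (hloop b hab b.lt_succ_self)).2,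
      ih fun j h₁ h₂ => hloop j h₁ (by omega)]

variable {X : Type} [CompleteLinearOrder X] {val : (ℕ → C) → X}

lemma val_le_vval_of_addLoops_path (hne : Neutral val e) {v : V} (hρ0 : ρ 0 = v)
    (hρ : ∀ i, addLoops E e (ρ i) (w i) (ρ (i + 1)))
    (hinf : {i | E (ρ i) (w i) (ρ (i + 1))}.Infinite) :
    val w ≤ vval val E v := by
  set σ := Nat.nth fun i => E (ρ i) (w i) (ρ (i + 1))
  have hedge : ∀ k, E (ρ (σ k)) (w (σ k)) (ρ (σ k + 1)) := Nat.nth_mem_of_infinite hinf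
  have hstart : ρ (σ 0) = v := by
    refine (addLoops_path_eq_of_no_edge hρ (Nat.zero_le _) fun j _ hj hE => ?_).trans hρ0
    have : σ 0 ≤ j := by simp only [σ, Nat.nth_zero]; exact Nat.sInf_le hE
    omega
  have hnext : ∀ k, ρ (σ (k + 1)) = ρ (σ k + 1) := fun k =>
    addLoops_path_eq_of_no_edge hρ (Nat.nth_strictMono hinf k.lt_succ_self)
      fun j hj₁ hj₂ hE => by
        have : j ≤ σ k := Nat.le_nth_of_lt_nth_succ hj₂ hE
        omega
  have hpath : InfPath E v (w ∘ σ) :=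
    ⟨ρ ∘ σ, hstart, fun k => by simpa only [Function.comp, hnext] using hedge k⟩
  have hins : IsEpsInsertion e (w ∘ σ) w := by
    refine ⟨σ, Nat.nth_strictMono hinf, fun _ => rfl, fun i hi => ?_⟩
    have hnE : ¬ E (ρ i) (w i) (ρ (i + 1)) := fun hE =>
      hi (Nat.range_nth_of_infinite hinf ▸ hE)
    exact ((hρ i).resolve_left hnE).1
  rw [hne _ _ hins]
  exact le_sSup ⟨_, hpath, rfl⟩

lemma exists_addLoops_path_wcat_ofFn (hρ : ∀ i, addLoops E e (ρ i) (w i) (ρ (i + 1))) (N : ℕ)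
    {π : ℕ → V} {z : ℕ → C} (hπ0 : π 0 = ρ N) (hπ : ∀ i, E (π i) (z i) (π (i + 1))) :
    ∃ ρ' : ℕ → V, ρ' 0 = ρ 0 ∧
      (∀ i, addLoops E e (ρ' i) (wcat (List.ofFn fun j : Fin N => w j) z i) (ρ' (i + 1))) ∧
      {i | E (ρ' i) (wcat (List.ofFn fun j : Fin N => w j) z i) (ρ' (i + 1))}.Infinite := by
  set ρ' : ℕ → V := fun i => if i ≤ N then ρ i else π (i - N)
  have hρ' : ∀ i, N ≤ i → ρ' i = π (i - N) := fun i hi => by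
    by_cases h : i ≤ N
    · obtain rfl : i = N := by omega
      simp [ρ', hπ0]
    · simp only [ρ', if_neg h]
  have hstep : ∀ i, N ≤ i →
      E (ρ' i) (wcat (List.ofFn fun j : Fin N => w j) z i) (ρ' (i + 1)) := fun i hi => by
    rw [hρ' i hi, hρ' (i + 1) (by omega), wcat_ofFn, if_neg (by omega),
      show i + 1 - N = i - N + 1 by omega]
    exact hπ _
  refine ⟨ρ', by simp [ρ'], fun i => ?_,
    Set.infinite_of_forall_exists_gt fun n => ⟨n + N + 1, hstep _ (by omega), by omega⟩⟩
  by_cases hi : i < N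
  · simpa only [ρ', if_pos hi.le, if_pos (Nat.succ_le_of_lt hi), wcat_ofFn, if_pos hi]
      using hρ i
  · exact Or.inl (hstep i (by omega))

lemma vval_addLoops_le (hsn : StronglyNeutral val e) (hE : NoSinks E) (v : V) :
    vval val (addLoops E e) v ≤ vval val E v := by
  refine sSup_le ?_
  rintro _ ⟨w, ⟨ρ, hρ0, hρ⟩, rfl⟩
  by_cases hinf : {i | E (ρ i) (w i) (ρ (i + 1))}.Infinite
  · exact val_le_vval_of_addLoops_path hsn.1 hρ0 hρ hinf
  obtain ⟨M, hM⟩ := (Set.not_infinite.1 hinf).bddAbove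
  set p := List.ofFn fun j : Fin (M + 1) => w j
  have hw : w = wcat p fun _ => e := by
    funext i
    rw [wcat_ofFn]
    split_ifs with hi
    · rfl
    · exact ((hρ i).resolve_left fun hE => hi (Nat.lt_succ_of_le (hM hE))).1
  obtain ⟨z, π, hπ0, hπ⟩ := hE.exists_infPath (ρ (M + 1))
  obtain ⟨ρ', hρ'0, hρ', hinf'⟩ := exists_addLoops_path_wcat_ofFn hρ (M + 1) hπ0 hπ
  calc val w = ⨅ z : ℕ → C, val (wcat p z) := by rw [hw, hsn.2]
    _ ≤ val (wcat p z) := iInf_le _ z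
    _ ≤ vval val E v := val_le_vval_of_addLoops_path hsn.1 (hρ'0.trans hρ0) hρ' hinf'

end Paths

section Strategies
variable {C X : Type} {V : Type u} [CompleteLinearOrder X] {E : V → C → V → Prop} {VEve : Set V}
  {v₀ : V}

lemma Strategy.exists_path_of_forall_not_mem (S : Strategy E VEve v₀) {ρ : ℕ → V} {w : ℕ → C}
    (hρ0 : ρ 0 = v₀) (hρ : ∀ i, E (ρ i) (w i) (ρ (i + 1))) (hAdam : ∀ i, ρ i ∉ VEve) :
    ∃ g : ℕ → List (C × V), g 0 = [] ∧ ∀ i, S.F (g i) (w i) (g (i + 1)) := by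
  let g : ℕ → List (C × V) := fun n => Nat.rec [] (fun i π => (w i, ρ (i + 1)) :: π) n
  have hlast : ∀ i, lastV v₀ (g i) = ρ i
    | 0 => hρ0.symm
    | _ + 1 => rfl
  have hext : ∀ i, g i ∈ S.H → g (i + 1) ∈ S.H ∧ S.F (g i) (w i) (g (i + 1)) := fun i hi =>
    S.adam_closed _ hi (by rw [hlast]; exact hAdam i) _ _ (by rw [hlast]; exact hρ i)
  have hmem : ∀ i, g i ∈ S.H := by
    intro i
    induction i with
    | zero => exact S.nil_mem
    | succ i ih => exact (hext i ih).1
  exact ⟨g, rfl, fun i => (hext i (hmem i)).2⟩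

end Strategies

section ReturnStrategy
variable {C : Type} {V : Type u} {E : V → C → V → Prop} {e : C} {v₀ : V}

def lastInl (v₀ : V) : List (C × (V ⊕ {A : Set V // A.Nonempty})) → V
  | [] => v₀
  | (_, Sum.inl a) :: _ => a
  | (_, Sum.inr _) :: π => lastInl v₀ π

lemma lastInl_of_lastV_eq {π : List (C × (V ⊕ {A : Set V // A.Nonempty}))} {a : V}
    (h : lastV (Sum.inl v₀) π = Sum.inl a) : lastInl v₀ π = a := by
  rcases π with _ | ⟨⟨_, _ | _⟩, π⟩ <;> simp_all [lastV, lastInl]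

variable (E e v₀) in
inductive ReturnPlay : List (C × (V ⊕ {A : Set V // A.Nonempty})) → Prop
  | nil : ReturnPlay []
  | adam {π a c y} : ReturnPlay π → lastV (Sum.inl v₀) π = Sum.inl a →
      gameE E e (Sum.inl a) c y → ReturnPlay ((c, y) :: π)
  | eve {π A} : ReturnPlay π → lastV (Sum.inl v₀) π = Sum.inr A →
      ReturnPlay ((e, Sum.inl (lastInl v₀ π)) :: π)

lemma ReturnPlay.lastInl_mem {π} (h : ReturnPlay E e v₀ π) {A : {A : Set V // A.Nonempty}}
    (hA : lastV (Sum.inl v₀) π = Sum.inr A) : lastInl v₀ π ∈ A.val := by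
  cases h with
  | nil => cases hA
  | @adam π a c y _ ha hy =>
    rcases y with b | B
    · cases hA
    · cases hA
      rw [lastInl, lastInl_of_lastV_eq ha]
      exact hy.2
  | eve => cases hA

lemma ReturnPlay.validPath {π} (h : ReturnPlay E e v₀ π) :
    ValidPath (gameE E e) (Sum.inl v₀) π := by
  induction h with
  | nil => trivial
  | adam _ ha hy ih => exact ⟨ih, ha ▸ hy⟩
  | eve h hA ih => exact ⟨ih, by rw [hA]; exact ⟨rfl, h.lastInl_mem hA⟩⟩

lemma ReturnPlay.addLoops_lastInl {π c x} (h : ReturnPlay E e v₀ ((c, x) :: π)) :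
    addLoops E e (lastInl v₀ π) c (lastInl v₀ ((c, x) :: π)) := by
  cases h with
  | adam _ ha hy =>
    rw [lastInl_of_lastV_eq ha]
    rcases x with b | B
    · exact Or.inl hy
    · exact Or.inr ⟨hy.1, by simp only [lastInl]; exact lastInl_of_lastV_eq ha⟩
  | eve => exact Or.inr ⟨rfl, rfl⟩

variable (e v₀) in
def returnStrategy (hE : NoSinks E) :
    Strategy (gameE E e) (Set.range Sum.inr) (Sum.inl v₀) where
  H := {π | ReturnPlay E e v₀ π}
  F π c π' := ReturnPlay E e v₀ π ∧ ReturnPlay E e v₀ π' ∧ ∃ x, π' = (c, x) :: π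
  valid _ h := h.validPath
  nil_mem := .nil
  F_sub _ _ _ h := h
  no_sink π hπ :=
    match hlast : lastV (Sum.inl v₀) π with
    | .inl a =>
      let ⟨c, b, hab⟩ := hE a
      ⟨c, _, hπ, .adam hπ hlast (show gameE E e (.inl a) c (.inl b) from hab), _, rfl⟩
    | .inr _ => ⟨e, _, hπ, .eve hπ hlast, _, rfl⟩
  adam_closed π hπ hAdam _ x hx :=
    match hlast : lastV (Sum.inl v₀) π with
    | .inl _ =>
      have hplay := ReturnPlay.adam hπ hlast (hlast ▸ hx)
      ⟨hplay, hπ, hplay, x, rfl⟩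
    | .inr A => absurd ⟨A, hlast.symm⟩ hAdam

lemma returnStrategy_value_le {X : Type} [CompleteLinearOrder X] (val : (ℕ → C) → X)
    (hE : NoSinks E) : (returnStrategy e v₀ hE).value val ≤ vval val (addLoops E e) v₀ := by
  refine sSup_le_sSup (Set.image_mono fun w ⟨ρ, hρ0, hρ⟩ => ?_)
  refine ⟨fun i => lastInl v₀ (ρ i), by simp [hρ0, lastInl], fun i => ?_⟩
  obtain ⟨-, hplay, x, hx⟩ := hρ i
  show addLoops E e (lastInl v₀ (ρ i)) (w i) (lastInl v₀ (ρ (i + 1)))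
  rw [hx] at hplay ⊢
  exact hplay.addLoops_lastInl

end ReturnStrategy

/-- Lemma 5.4.  For every `v₀ ∈ V`, the value of `v₀` in
the game `𝒢'` equals its value in the graph `G`. -/
theorem stmt7 {C X : Type} {V : Type u} [CompleteLinearOrder X]
    (val : (ℕ → C) → X) (e : C) (hsn : StronglyNeutral val e)
    (E : V → C → V → Prop) (hE : NoSinks E) :
    ∀ v₀ : V,
      gameValue val (gameE E e) (Set.range Sum.inr) (Sum.inl v₀) =
        vval val E v₀ := by
  intro v₀
  refine le_antisymm ?_ ?_
  · calc gameValue val (gameE E e) (Set.range Sum.inr) (Sum.inl v₀)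
        ≤ (returnStrategy e v₀ hE).value val := iInf_le _ _
      _ ≤ vval val (addLoops E e) v₀ := returnStrategy_value_le val hE
      _ ≤ vval val E v₀ := vval_addLoops_le hsn hE v₀
  · refine le_iInf fun S => sSup_le_sSup (Set.image_mono fun w ⟨ρ, hρ0, hρ⟩ => ?_)
    refine S.exists_path_of_forall_not_mem (ρ := Sum.inl ∘ ρ) (by simp [hρ0]) hρ ?_
    rintro i ⟨A, hA⟩
    cases hA
end

section
/- Let W ⊆ C^ω be a prefix-increasing objective, let L̄ be a completely well-monotonic C-graph, and let L be the restriction of L̄ to the set of its vertices which satisfy W (this restriction is a well-monotonic C-graph, since by prefix-increasingness no edge of L̄ leaves this downward-closed set). Let κ be a cardinal. Then the following are equivalent: (i) L̄ is (κ,W)-universal; (ii) the completion L^⊤ is (κ,W)-universal; (iii) every C-graph with fewer than κ vertices satisfying W admits a morphism into L. -/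
/-!
Common vocabulary: graphs as edge relations `E : V → C → V → Prop` (a `C`-graph
additionally has no sinks), infinite paths and their colorations, valuations,
values of vertices, morphisms, universality, monotonic graphs, games,
strategies, positional strategies and positionality, neutral colors.
-/

universe u v w

/-!
For an objective the value of a vertex is just whether it fails `W`, so a `W`-preserving
morphism is a morphism that sends vertices satisfying `W` to vertices satisfying `W` (the
converse holds for every morphism). Prefix-increasingness makes the satisfying vertices
closed under edges. The top vertex of `L̄` and the new top vertex of `L^⊤` have all
outgoing edges, so they can absorb every vertex failing `W`. This gives `W`-preserving
morphisms `L̄ → L^⊤` and `L^⊤ → L̄`, whence (i) ⇔ (ii), and reduces universality of `L̄` to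
mapping the satisfying part of a small graph into `L`, whence (i) ⇔ (iii).
-/

section Universality

variable {C : Type} {X : Type} [CompleteLinearOrder X] {val : (ℕ → C) → X}
  {W : Set (ℕ → C)}

abbrev satSubgraph {V : Type*} (W : Set (ℕ → C)) (E : V → C → V → Prop) :
    {v // Sat W E v} → C → {v // Sat W E v} → Prop :=
  fun p c q => E p.val c q.val

lemma IsMorphism.infPath {V V' : Type*} {E : V → C → V → Prop} {E' : V' → C → V' → Prop}
    {φ : V → V'} (hφ : IsMorphism E E' φ) {a : V} {w : ℕ → C} (h : InfPath E a w) :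
    InfPath E' (φ a) w := by
  obtain ⟨ρ, rfl, hρ⟩ := h
  exact ⟨φ ∘ ρ, rfl, fun i => hφ (hρ i)⟩

lemma IsMorphism.sat {V V' : Type*} {E : V → C → V → Prop} {E' : V' → C → V' → Prop}
    {φ : V → V'} (hφ : IsMorphism E E' φ) {a : V} (h : Sat W E' (φ a)) : Sat W E a :=
  fun w hw => h w (hφ.infPath hw)

lemma ValPreserving.comp {V V' V'' : Type*} {E : V → C → V → Prop}
    {E' : V' → C → V' → Prop} {E'' : V'' → C → V'' → Prop} {f : V → V'} {g : V' → V''}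
    (hg : ValPreserving val E' E'' g) (hf : ValPreserving val E E' f) :
    ValPreserving val E E'' (g ∘ f) :=
  ⟨fun _ _ _ h => hg.1 (hf.1 h), fun a => (hg.2 (f a)).trans (hf.2 a)⟩

lemma Universal.of_valPreserving {κ : Cardinal.{u}} {K K' : Type*}
    {N : K → C → K → Prop} {N' : K' → C → K' → Prop} {g : K → K'}
    (hN : Universal val κ N) (hg : ValPreserving val N N' g) : Universal val κ N' := by
  intro V E hE hV
  obtain ⟨φ, hφ⟩ := hN V E hE hV
  exact ⟨g ∘ φ, hg.comp hφ⟩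

lemma vval_toVal {V : Type*} (E : V → C → V → Prop) (a : V) :
    vval (toVal W) E a = ¬ Sat W E a := by
  simp only [vval, sSup_Prop_eq, Sat, toVal, Set.mem_image, Set.mem_ofPred_eq, not_forall,
    exists_prop]
  exact propext ⟨fun ⟨_, ⟨w, hw, rfl⟩, hp⟩ => ⟨w, hw, hp⟩,
    fun ⟨w, hw, hp⟩ => ⟨_, ⟨w, hw, rfl⟩, hp⟩⟩

lemma valPreserving_toVal_iff {V V' : Type*} {E : V → C → V → Prop}
    {E' : V' → C → V' → Prop} {φ : V → V'} :
    ValPreserving (toVal W) E E' φ ↔ IsMorphism E E' φ ∧ ∀ a, Sat W E a → Sat W E' (φ a) := by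
  simp only [ValPreserving, vval_toVal, eq_iff_iff, not_iff_not]
  exact and_congr_right fun hφ => forall_congr' fun a => ⟨Iff.mpr, fun h => ⟨hφ.sat, h⟩⟩

lemma sat_satSubgraph {V : Type*} {E : V → C → V → Prop} (v : {v // Sat W E v}) :
    Sat W (satSubgraph W E) v :=
  IsMorphism.sat (E' := E) (φ := Subtype.val) (fun _ _ _ h => h) v.prop

lemma mem_of_sat_of_forall_edge {K : Type*} {N : K → C → K → Prop} {t : K}
    (ht : ∀ c k, N t c k) (h : Sat W N t) (w : ℕ → C) : w ∈ W :=
  h w ⟨fun _ => t, rfl, fun _ => ht _ _⟩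

open Classical in
noncomputable def extendByTop {V K : Type*} (W : Set (ℕ → C)) (E : V → C → V → Prop)
    (N : K → C → K → Prop) (t : K) (ψ : {v // Sat W E v} → {k // Sat W N k}) (v : V) : K :=
  if h : Sat W E v then (ψ ⟨v, h⟩).val else t

variable (hpi : ∀ (u : List C) (w : ℕ → C), wcat u w ∈ W → w ∈ W)
include hpi

lemma Sat.of_edge {V : Type*} {E : V → C → V → Prop} {a b : V} {c : C}
    (ha : Sat W E a) (hab : E a c b) : Sat W E b := by
  rintro w ⟨ρ, rfl, hρ⟩
  refine hpi [c] w (ha _ ⟨fun | 0 => a | j + 1 => ρ j, rfl, ?_⟩)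
  rintro (_ | j)
  · simpa [wcat] using hab
  · simpa [wcat] using hρ j

lemma noSinks_satSubgraph {V : Type*} {E : V → C → V → Prop} (hE : NoSinks E) :
    NoSinks (satSubgraph W E) := by
  rintro ⟨a, ha⟩
  obtain ⟨c, b, hab⟩ := hE a
  exact ⟨c, ⟨b, ha.of_edge hpi hab⟩, hab⟩

lemma valPreserving_extendByTop {V K : Type*} {E : V → C → V → Prop}
    {N : K → C → K → Prop} {t : K} (ht : ∀ c k, N t c k)
    {ψ : {v // Sat W E v} → {k // Sat W N k}}
    (hψ : IsMorphism (satSubgraph W E) (satSubgraph W N) ψ) :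
    ValPreserving (toVal W) E N (extendByTop W E N t ψ) := by
  refine valPreserving_toVal_iff.mpr ⟨fun a c b hab => ?_, fun a ha => ?_⟩
  · by_cases ha : Sat W E a
    · have hb := ha.of_edge hpi hab
      simp only [extendByTop, dif_pos ha, dif_pos hb]
      exact hψ (a := ⟨a, ha⟩) (b := ⟨b, hb⟩) hab
    · simp only [extendByTop, dif_neg ha]
      exact ht c _
  · simp only [extendByTop, dif_pos ha]
    exact (ψ ⟨a, ha⟩).prop

theorem universal_toVal_iff {κ : Cardinal.{u}} {K : Type*} {N : K → C → K → Prop} {t : K}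
    (ht : ∀ c k, N t c k) :
    Universal (toVal W) κ N ↔
      ∀ (V : Type u) (E : V → C → V → Prop), NoSinks E → Cardinal.mk V < κ →
        (∀ v : V, Sat W E v) → ∃ φ : V → {k // Sat W N k}, IsMorphism E (satSubgraph W N) φ := by
  constructor
  · intro hN V E hE hV hsat
    obtain ⟨φ, hφ⟩ := hN V E hE hV
    obtain ⟨hφ, hφsat⟩ := valPreserving_toVal_iff.mp hφ
    exact ⟨fun v => ⟨φ v, hφsat v (hsat v)⟩, fun _ _ _ h => hφ h⟩
  · intro h V E hE hV
    obtain ⟨ψ, hψ⟩ := h _ (satSubgraph W E) (noSinks_satSubgraph hpi hE)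
      ((Cardinal.mk_subtype_le _).trans_lt hV)
      sat_satSubgraph
    exact ⟨_, valPreserving_extendByTop hpi ht hψ⟩

end Universality

section Completion

variable {C : Type} {L : Type*} {W : Set (ℕ → C)} {M : L → C → L → Prop} {t : L}

lemma forall_edge_of_isTop [LinearOrder L] (hleft : LeftComp M) (hpred : CompletePreds M)
    (ht : IsTop t) (c : C) (l : L) : M t c l :=
  (hpred c l).elim fun _ hp => hleft (ht _) hp

def ofCompletion (W : Set (ℕ → C)) (M : L → C → L → Prop) (t : L) :
    WithTop {l // Sat W M l} → L :=
  WithTop.recTopCoe t Subtype.val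

lemma valPreserving_ofCompletion (ht : ∀ c l, M t c l) :
    ValPreserving (toVal W) (completionE (satSubgraph W M)) M (ofCompletion W M t) := by
  refine valPreserving_toVal_iff.mpr ⟨?_, ?_⟩
  · rintro _ c _ (rfl | ⟨p, q, rfl, rfl, hpq⟩)
    · exact ht c _
    · exact hpq
  · rintro (_ | l) h
    · exact fun w _ => mem_of_sat_of_forall_edge (fun _ _ => Or.inl rfl) h w
    · exact l.prop

lemma exists_valPreserving_toCompletion
    (hpi : ∀ (u : List C) (w : ℕ → C), wcat u w ∈ W → w ∈ W) (ht : ∀ c l, M t c l) :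
    ∃ g : L → WithTop {l // Sat W M l},
      ValPreserving (toVal W) M (completionE (satSubgraph W M)) g :=
  ⟨_, valPreserving_extendByTop (N := completionE (satSubgraph W M)) (t := ⊤) hpi
    (fun _ _ => Or.inl rfl) (ψ := fun l => ⟨l, (valPreserving_ofCompletion ht).1.sat l.prop⟩)
    fun a _ b h => Or.inr ⟨a, b, rfl, rfl, h⟩⟩

end Completion

/-- Lemma 6.2, universality for prefix-increasing
objectives.  Let `W` be a prefix-increasing objective, `L̄` a completely
well-monotonic graph, and `L` the restriction of `L̄` to the vertices
satisfying `W`.  Then the following are equivalent: (i) `L̄` is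
`(κ, W)`-universal; (ii) the completion `L^⊤` is `(κ, W)`-universal;
(iii) every graph with fewer than `κ` vertices satisfying `W` admits a
morphism into `L`. -/
theorem stmt10 {C : Type} {L : Type v} [LinearOrder L] (W : Set (ℕ → C))
    (hpi : ∀ (u : List C) (w : ℕ → C), wcat u w ∈ W → w ∈ W)
    (M : L → C → L → Prop) (hcwm : CWM C L M) (κ : Cardinal.{u}) :
    (Universal (toVal W) κ M ↔
      Universal (toVal W) κ
        (completionE
          (fun (p : {l : L // Sat W M l}) (c : C) (q : {l : L // Sat W M l}) =>
            M p.val c q.val))) ∧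
    (Universal (toVal W) κ M ↔
      ∀ (V : Type u) (E : V → C → V → Prop), NoSinks E → Cardinal.mk V < κ →
        (∀ v : V, Sat W E v) →
        ∃ φ : V → {l : L // Sat W M l},
          IsMorphism E
            (fun (p : {l : L // Sat W M l}) (c : C) (q : {l : L // Sat W M l}) =>
              M p.val c q.val) φ) := by
  obtain ⟨⟨hleft, -⟩, -, -, hlub, hpred⟩ := hcwm
  obtain ⟨t, ht⟩ := hlub Set.univ
  have htop : ∀ c l, M t c l := forall_edge_of_isTop hleft hpred fun l => ht.1 (Set.mem_univ l)
  obtain ⟨g, hg⟩ := exists_valPreserving_toCompletion hpi htop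
  exact ⟨⟨fun h => h.of_valPreserving hg,
    fun h => h.of_valPreserving (valPreserving_ofCompletion htop)⟩, universal_toVal_iff hpi htop⟩
end
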